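/- arXiv:1310.1322 — 2 statements merged into one kernel-verified Lean document; each statement's English description precedes it below -/
import Mathlib

section
/- For the map T : ℝ⁴ → ℝ⁴ given by 𝒰 = U, 𝒱 = V + Θ(U) H(X,Y) + ½ U_+(U)(H_{,X}² + H_{,Y}²), x = X + U_+(U) H_{,X}, y = Y + U_+(U) H_{,Y}, the restriction of T to each of the half-spaces {U < 0} and {U > 0} is a smooth diffeomorphism onto its image near any point where I + U_+ Hess H is invertible; T is discontinuous precisely at points of {U = 0} where H(X,Y) ≠ 0. -/
/-- Heaviside function with `Θ(U) = 0` for `U ≤ 0`. -/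
noncomputable def Theta (U : ℝ) : ℝ := if 0 < U then 1 else 0

/-- Partial derivatives of `H : ℝ × ℝ → ℝ`. -/
noncomputable def HX (H : ℝ × ℝ → ℝ) (p : ℝ × ℝ) : ℝ := fderiv ℝ H p (1, 0)
noncomputable def HY (H : ℝ × ℝ → ℝ) (p : ℝ × ℝ) : ℝ := fderiv ℝ H p (0, 1)

/-- The discontinuous Penrose "coordinate transformation"
`T(U,V,X,Y) = (𝒰,𝒱,x,y)` relating the Rosen and Brinkmann forms of the metric. -/
noncomputable def PenroseT (H : ℝ × ℝ → ℝ) (p : ℝ × ℝ × ℝ × ℝ) : ℝ × ℝ × ℝ × ℝ :=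
  let U := p.1; let V := p.2.1; let X := p.2.2.1; let Y := p.2.2.2
  (U,
   V + Theta U * H (X, Y) + (1/2) * max U 0 * ((HX H (X, Y))^2 + (HY H (X, Y))^2),
   X + max U 0 * HX H (X, Y),
   Y + max U 0 * HY H (X, Y))

/-- Determinant of `I + U₊ Hess H` at `(X, Y)`. -/
noncomputable def detFactor (H : ℝ × ℝ → ℝ) (U : ℝ) (q : ℝ × ℝ) : ℝ :=
  (1 + max U 0 * fderiv ℝ (HX H) q (1, 0)) * (1 + max U 0 * fderiv ℝ (HY H) q (0, 1))
    - (max U 0 * fderiv ℝ (HX H) q (0, 1)) * (max U 0 * fderiv ℝ (HY H) q (1, 0))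

lemma contDiff_HX {H : ℝ × ℝ → ℝ} (hH : ContDiff ℝ (⊤ : ℕ∞) H) : ContDiff ℝ (⊤ : ℕ∞) (HX H) :=
  (ContinuousLinearMap.apply ℝ ℝ ((1:ℝ),(0:ℝ))).contDiff.comp (hH.fderiv_right (by simp))
lemma contDiff_HY {H : ℝ × ℝ → ℝ} (hH : ContDiff ℝ (⊤ : ℕ∞) H) : ContDiff ℝ (⊤ : ℕ∞) (HY H) :=
  (ContinuousLinearMap.apply ℝ ℝ ((0:ℝ),(1:ℝ))).contDiff.comp (hH.fderiv_right (by simp))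

noncomputable def fPos (H : ℝ × ℝ → ℝ) (p : ℝ × ℝ × ℝ × ℝ) : ℝ × ℝ × ℝ × ℝ :=
  (p.1,
   p.2.1 + (H (p.2.2.1, p.2.2.2) +
     (1/2) * (p.1 * ((HX H (p.2.2.1, p.2.2.2))^2 + (HY H (p.2.2.1, p.2.2.2))^2))),
   p.2.2.1 + p.1 * HX H (p.2.2.1, p.2.2.2),
   p.2.2.2 + p.1 * HY H (p.2.2.1, p.2.2.2))

open ContinuousLinearMap in
lemma fPos_hasFDerivAt_equiv {H : ℝ × ℝ → ℝ} (hH : ContDiff ℝ (⊤ : ℕ∞) H)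
    (a : ℝ × ℝ × ℝ × ℝ) (ha : 0 < a.1)
    (hdet : detFactor H a.1 (a.2.2.1, a.2.2.2) ≠ 0) :
    ∃ A : (ℝ × ℝ × ℝ × ℝ) ≃L[ℝ] (ℝ × ℝ × ℝ × ℝ),
      HasFDerivAt (fPos H) (A : (ℝ × ℝ × ℝ × ℝ) →L[ℝ] (ℝ × ℝ × ℝ × ℝ)) a := by
  classical
  set q : ℝ × ℝ := (a.2.2.1, a.2.2.2) with hq
  set g1 : ℝ × ℝ → ℝ := HX H
  set g2 : ℝ × ℝ → ℝ := HY H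
  set k : ℝ × ℝ → ℝ := fun r => (g1 r)^2 + (g2 r)^2 with hk
  have hg1 : ContDiff ℝ (⊤ : ℕ∞) g1 := contDiff_HX hH
  have hg2 : ContDiff ℝ (⊤ : ℕ∞) g2 := contDiff_HY hH
  have hkC : ContDiff ℝ (⊤ : ℕ∞) k := (hg1.pow 2).add (hg2.pow 2)
  set P1 : (ℝ × ℝ × ℝ × ℝ) →L[ℝ] ℝ := ContinuousLinearMap.fst ℝ ℝ (ℝ × ℝ × ℝ)
  set P2 : (ℝ × ℝ × ℝ × ℝ) →L[ℝ] (ℝ × ℝ × ℝ) := ContinuousLinearMap.snd ℝ ℝ (ℝ × ℝ × ℝ)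
  set Pv : (ℝ × ℝ × ℝ × ℝ) →L[ℝ] ℝ := (ContinuousLinearMap.fst ℝ ℝ (ℝ × ℝ)).comp P2
  set Pxy : (ℝ × ℝ × ℝ × ℝ) →L[ℝ] (ℝ × ℝ) := (ContinuousLinearMap.snd ℝ ℝ (ℝ × ℝ)).comp P2
  set Px : (ℝ × ℝ × ℝ × ℝ) →L[ℝ] ℝ := (ContinuousLinearMap.fst ℝ ℝ ℝ).comp Pxy
  set Py : (ℝ × ℝ × ℝ × ℝ) →L[ℝ] ℝ := (ContinuousLinearMap.snd ℝ ℝ ℝ).comp Pxy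
  set D1 : (ℝ × ℝ) →L[ℝ] ℝ := fderiv ℝ g1 q
  set D2 : (ℝ × ℝ) →L[ℝ] ℝ := fderiv ℝ g2 q
  set DH : (ℝ × ℝ) →L[ℝ] ℝ := fderiv ℝ H q
  set Dk : (ℝ × ℝ) →L[ℝ] ℝ := fderiv ℝ k q
  set L2 : (ℝ × ℝ × ℝ × ℝ) →L[ℝ] ℝ :=
    Pv + (DH.comp Pxy + (1/2 : ℝ) • (a.1 • (Dk.comp Pxy) + k q • P1))
  set L3 : (ℝ × ℝ × ℝ × ℝ) →L[ℝ] ℝ := Px + (a.1 • (D1.comp Pxy) + g1 q • P1)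
  set L4 : (ℝ × ℝ × ℝ × ℝ) →L[ℝ] ℝ := Py + (a.1 • (D2.comp Pxy) + g2 q • P1)
  set L : (ℝ × ℝ × ℝ × ℝ) →L[ℝ] (ℝ × ℝ × ℝ × ℝ) := P1.prod (L2.prod (L3.prod L4))
  -- derivative
  have hu : HasFDerivAt (fun p : ℝ × ℝ × ℝ × ℝ => p.1) P1 a := P1.hasFDerivAt
  have hv : HasFDerivAt (fun p : ℝ × ℝ × ℝ × ℝ => p.2.1) Pv a := Pv.hasFDerivAt
  have hx : HasFDerivAt (fun p : ℝ × ℝ × ℝ × ℝ => p.2.2.1) Px a := Px.hasFDerivAt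
  have hy : HasFDerivAt (fun p : ℝ × ℝ × ℝ × ℝ => p.2.2.2) Py a := Py.hasFDerivAt
  have hxy : HasFDerivAt (fun p : ℝ × ℝ × ℝ × ℝ => (p.2.2.1, p.2.2.2)) Pxy a := Pxy.hasFDerivAt
  have hg1d : HasFDerivAt (fun p : ℝ × ℝ × ℝ × ℝ => g1 (p.2.2.1, p.2.2.2)) (D1.comp Pxy) a :=
    ((hg1.differentiable (by simp)).differentiableAt.hasFDerivAt).comp a hxy
  have hg2d : HasFDerivAt (fun p : ℝ × ℝ × ℝ × ℝ => g2 (p.2.2.1, p.2.2.2)) (D2.comp Pxy) a :=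
    ((hg2.differentiable (by simp)).differentiableAt.hasFDerivAt).comp a hxy
  have hHd : HasFDerivAt (fun p : ℝ × ℝ × ℝ × ℝ => H (p.2.2.1, p.2.2.2)) (DH.comp Pxy) a :=
    ((hH.differentiable (by simp)).differentiableAt.hasFDerivAt).comp a hxy
  have hkd : HasFDerivAt (fun p : ℝ × ℝ × ℝ × ℝ => k (p.2.2.1, p.2.2.2)) (Dk.comp Pxy) a :=
    ((hkC.differentiable (by simp)).differentiableAt.hasFDerivAt).comp a hxy
  have hL : HasFDerivAt (fPos H) L a := by
    exact hu.prodMk ((hv.add (hHd.add ((hu.mul hkd).const_mul (1/2)))).prodMk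
      ((hx.add (hu.mul hg1d)).prodMk (hy.add (hu.mul hg2d))))
  -- injectivity
  have hDapp : ∀ (M : (ℝ × ℝ) →L[ℝ] ℝ) (w : ℝ × ℝ),
      M w = w.1 * M (1, 0) + w.2 * M (0, 1) := by
    intro M w
    have hw : w = w.1 • ((1:ℝ), (0:ℝ)) + w.2 • ((0:ℝ), (1:ℝ)) := by
      ext <;> simp
    conv_lhs => rw [hw]
    rw [map_add, map_smul, map_smul, smul_eq_mul, smul_eq_mul]
  have hker : ∀ v : ℝ × ℝ × ℝ × ℝ, L v = 0 → v = 0 := by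
    intro v hv0
    have h1 : v.1 = 0 := congrArg Prod.fst hv0
    have h2 : L2 v = 0 := congrArg (fun w => w.2.1) hv0
    have h3 : L3 v = 0 := congrArg (fun w => w.2.2.1) hv0
    have h4 : L4 v = 0 := congrArg (fun w => w.2.2.2) hv0
    have hmax : max a.1 0 = a.1 := max_eq_left ha.le
    rw [detFactor, hmax] at hdet
    simp only [L3, L4, L2, ContinuousLinearMap.add_apply, ContinuousLinearMap.smul_apply,
      ContinuousLinearMap.comp_apply, ContinuousLinearMap.coe_fst', ContinuousLinearMap.coe_snd',
      smul_eq_mul, Px, Py, Pv, Pxy, P1, P2] at h2 h3 h4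
    rw [hDapp D1, h1] at h3
    rw [hDapp D2, h1] at h4
    rw [hDapp DH, hDapp Dk, h1] at h2
    set dx := v.2.2.1
    set dy := v.2.2.2
    have hα : fderiv ℝ (HX H) q (1,0) = D1 (1,0) := rfl
    have hβ : fderiv ℝ (HX H) q (0,1) = D1 (0,1) := rfl
    have hγ : fderiv ℝ (HY H) q (1,0) = D2 (1,0) := rfl
    have hδ : fderiv ℝ (HY H) q (0,1) = D2 (0,1) := rfl
    rw [hα, hβ, hγ, hδ] at hdet
    have hdx : dx = 0 := by
      have hmul : dx * ((1 + a.1 * D1 (1,0)) * (1 + a.1 * D2 (0,1)) -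
          a.1 * D1 (0,1) * (a.1 * D2 (1,0))) = 0 := by
        linear_combination (1 + a.1 * D2 (0,1)) * h3 - (a.1 * D1 (0,1)) * h4
      exact (mul_eq_zero.mp hmul).resolve_right hdet
    have hdy : dy = 0 := by
      have hmul : dy * ((1 + a.1 * D1 (1,0)) * (1 + a.1 * D2 (0,1)) -
          a.1 * D1 (0,1) * (a.1 * D2 (1,0))) = 0 := by
        linear_combination (1 + a.1 * D1 (1,0)) * h4 - (a.1 * D2 (1,0)) * h3
      exact (mul_eq_zero.mp hmul).resolve_right hdet
    have h2' : v.2.1 = 0 := by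
      rw [hdx, hdy] at h2
      simpa using h2
    exact Prod.ext h1 (Prod.ext h2' (Prod.ext hdx hdy))
  have hinj : Function.Injective L := by
    intro v w hvw
    have := hker (v - w) (by rw [map_sub, hvw, sub_self])
    exact sub_eq_zero.mp this
  have hbij : Function.Bijective L :=
    ⟨hinj, LinearMap.injective_iff_surjective.mp hinj⟩
  let A : (ℝ × ℝ × ℝ × ℝ) ≃L[ℝ] (ℝ × ℝ × ℝ × ℝ) :=
    LinearEquiv.toContinuousLinearEquiv (LinearEquiv.ofBijective (L : _ →ₗ[ℝ] _) hbij)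
  refine ⟨A, ?_⟩
  have : (A : (ℝ × ℝ × ℝ × ℝ) →L[ℝ] (ℝ × ℝ × ℝ × ℝ)) = L := by
    ext v <;> rfl
  rw [this]; exact hL

lemma contDiff_fPos {H : ℝ × ℝ → ℝ} (hH : ContDiff ℝ (⊤ : ℕ∞) H) : ContDiff ℝ (⊤ : ℕ∞) (fPos H) := by
  have hxy : ContDiff ℝ (⊤ : ℕ∞) (fun p : ℝ × ℝ × ℝ × ℝ => (p.2.2.1, p.2.2.2)) :=
    contDiff_snd.comp contDiff_snd
  have h1 : ContDiff ℝ (⊤ : ℕ∞) (fun p : ℝ × ℝ × ℝ × ℝ => HX H (p.2.2.1, p.2.2.2)) :=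
    (contDiff_HX hH).comp hxy
  have h2 : ContDiff ℝ (⊤ : ℕ∞) (fun p : ℝ × ℝ × ℝ × ℝ => HY H (p.2.2.1, p.2.2.2)) :=
    (contDiff_HY hH).comp hxy
  have h3 : ContDiff ℝ (⊤ : ℕ∞) (fun p : ℝ × ℝ × ℝ × ℝ => H (p.2.2.1, p.2.2.2)) := hH.comp hxy
  exact contDiff_fst.prodMk
    (((contDiff_fst.comp contDiff_snd).add
      (h3.add (contDiff_const.mul (contDiff_fst.mul ((h1.pow 2).add (h2.pow 2)))))).prodMk
      (((contDiff_fst.comp hxy).add (contDiff_fst.mul h1)).prodMk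
        ((contDiff_snd.comp hxy).add (contDiff_fst.mul h2))))

/-- Everything in `PenroseT` except the `Theta` term. -/
noncomputable def gAux (H : ℝ × ℝ → ℝ) (p : ℝ × ℝ × ℝ × ℝ) : ℝ × ℝ × ℝ × ℝ :=
  (p.1,
   p.2.1 + (1/2) * max p.1 0 * ((HX H (p.2.2.1, p.2.2.2))^2 + (HY H (p.2.2.1, p.2.2.2))^2),
   p.2.2.1 + max p.1 0 * HX H (p.2.2.1, p.2.2.2),
   p.2.2.2 + max p.1 0 * HY H (p.2.2.1, p.2.2.2))

noncomputable def thetaF (H : ℝ × ℝ → ℝ) (p : ℝ × ℝ × ℝ × ℝ) : ℝ :=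
  Theta p.1 * H (p.2.2.1, p.2.2.2)

lemma continuous_gAux {H : ℝ × ℝ → ℝ} (hH : ContDiff ℝ (⊤ : ℕ∞) H) : Continuous (gAux H) := by
  have hxy : Continuous (fun p : ℝ × ℝ × ℝ × ℝ => (p.2.2.1, p.2.2.2)) :=
    continuous_snd.comp continuous_snd
  have h1 : Continuous (fun p : ℝ × ℝ × ℝ × ℝ => HX H (p.2.2.1, p.2.2.2)) :=
    (contDiff_HX hH).continuous.comp hxy
  have h2 : Continuous (fun p : ℝ × ℝ × ℝ × ℝ => HY H (p.2.2.1, p.2.2.2)) :=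
    (contDiff_HY hH).continuous.comp hxy
  have hm : Continuous (fun p : ℝ × ℝ × ℝ × ℝ => max p.1 0) :=
    continuous_fst.max continuous_const
  exact continuous_fst.prodMk
    (((continuous_fst.comp continuous_snd).add
      ((continuous_const.mul hm).mul ((h1.pow 2).add (h2.pow 2)))).prodMk
      (((continuous_fst.comp hxy).add (hm.mul h1)).prodMk
        ((continuous_snd.comp hxy).add (hm.mul h2))))

lemma penroseT_eq_comb (H : ℝ × ℝ → ℝ) :
    PenroseT H = fun q =>
      ((gAux H q).1, (gAux H q).2.1 + thetaF H q, (gAux H q).2.2.1, (gAux H q).2.2.2) := by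
  funext q
  simp only [PenroseT, gAux, thetaF]
  refine Prod.ext rfl (Prod.ext (by ring) rfl)

lemma continuousAt_penroseT_iff {H : ℝ × ℝ → ℝ} (hH : ContDiff ℝ (⊤ : ℕ∞) H)
    (p : ℝ × ℝ × ℝ × ℝ) :
    ContinuousAt (PenroseT H) p ↔ ContinuousAt (thetaF H) p := by
  constructor
  · intro hT
    have h2 : ContinuousAt (fun q => (PenroseT H q).2.1) p := hT.snd.fst
    have hG : ContinuousAt (fun q => (gAux H q).2.1) p :=
      ((continuous_gAux hH).continuousAt (x := p)).snd.fst
    have : ContinuousAt (fun q => (PenroseT H q).2.1 - (gAux H q).2.1) p := h2.sub hG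
    refine this.congr (Filter.Eventually.of_forall fun q => ?_)
    simp only [PenroseT, gAux, thetaF]
    ring
  · intro hθ
    rw [penroseT_eq_comb]
    have hG := (continuous_gAux hH).continuousAt (x := p)
    have h1 : ContinuousAt (fun q => (gAux H q).1) p := hG.fst
    have h2 : ContinuousAt (fun q => (gAux H q).2.1) p := hG.snd.fst
    have h3 : ContinuousAt (fun q => (gAux H q).2.2.1) p := hG.snd.snd.fst
    have h4 : ContinuousAt (fun q => (gAux H q).2.2.2) p := hG.snd.snd.snd
    exact h1.prodMk ((h2.add hθ).prodMk (h3.prodMk h4))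

lemma continuousAt_thetaF_iff {H : ℝ × ℝ → ℝ} (hH : ContDiff ℝ (⊤ : ℕ∞) H)
    (p : ℝ × ℝ × ℝ × ℝ) :
    ContinuousAt (thetaF H) p ↔ ¬ (p.1 = 0 ∧ H (p.2.2.1, p.2.2.2) ≠ 0) := by
  have hHc : Continuous (fun q : ℝ × ℝ × ℝ × ℝ => H (q.2.2.1, q.2.2.2)) :=
    hH.continuous.comp (continuous_snd.comp continuous_snd)
  constructor
  · -- continuity at p with p.1 = 0 forces H = 0 there
    intro hθ
    rintro ⟨hp0, hne⟩
    have hγ : ContinuousAt (fun t : ℝ => (t, p.2)) 0 :=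
      (continuous_id.prodMk continuous_const).continuousAt
    have hp : ((0 : ℝ), p.2) = p := by
      rw [← hp0]
    have hφ : ContinuousAt (fun t : ℝ => thetaF H (t, p.2)) 0 := by
      rw [← hp] at hθ
      exact ContinuousAt.comp (f := fun t : ℝ => (t, p.2)) hθ hγ
    have hφ0 : thetaF H ((0:ℝ), p.2) = 0 := by
      simp [thetaF, Theta]
    have htend : Filter.Tendsto (fun t : ℝ => thetaF H (t, p.2)) (nhdsWithin 0 (Set.Ioi 0))
        (nhds 0) := by
      have := hφ.tendsto
      rw [hφ0] at this
      exact this.mono_left nhdsWithin_le_nhds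
    have hconst : Filter.Tendsto (fun _ : ℝ => H (p.2.2.1, p.2.2.2))
        (nhdsWithin 0 (Set.Ioi 0)) (nhds (H (p.2.2.1, p.2.2.2))) := tendsto_const_nhds
    have heq : (fun t : ℝ => thetaF H (t, p.2)) =ᶠ[nhdsWithin 0 (Set.Ioi 0)]
        (fun _ => H (p.2.2.1, p.2.2.2)) := by
      filter_upwards [self_mem_nhdsWithin] with t ht
      simp [thetaF, Theta, (Set.mem_Ioi.mp ht)]
    have := tendsto_nhds_unique (htend.congr' heq) hconst
    exact hne this.symm
  · intro hn
    rcases lt_trichotomy p.1 0 with hlt | heq0 | hgt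
    · -- locally zero
      have hmem : {q : ℝ × ℝ × ℝ × ℝ | q.1 < 0} ∈ nhds p :=
        (isOpen_lt continuous_fst continuous_const).mem_nhds hlt
      have : ContinuousAt (fun _ : ℝ × ℝ × ℝ × ℝ => (0:ℝ)) p := continuousAt_const
      refine this.congr ?_
      filter_upwards [hmem] with q hq
      simp [thetaF, Theta, not_lt.mpr (le_of_lt hq)]
    · -- p.1 = 0, so H vanishes at p; squeeze
      have hH0 : H (p.2.2.1, p.2.2.2) = 0 := by
        by_contra hne
        exact hn ⟨heq0, hne⟩
      have hval : thetaF H p = 0 := by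
        simp [thetaF, Theta, heq0, hH0]
      rw [ContinuousAt, hval]
      have habs : Filter.Tendsto (fun q : ℝ × ℝ × ℝ × ℝ => |H (q.2.2.1, q.2.2.2)|)
          (nhds p) (nhds 0) := by
        have h' := (hHc.abs).tendsto p
        simpa [hH0] using h'
      refine squeeze_zero_norm (fun q => ?_) habs
      have : |Theta q.1| ≤ 1 := by
        simp only [Theta]; split <;> simp
      calc ‖thetaF H q‖ = |Theta q.1| * |H (q.2.2.1, q.2.2.2)| := by
            simp [thetaF, abs_mul]
        _ ≤ 1 * |H (q.2.2.1, q.2.2.2)| := by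
            exact mul_le_mul_of_nonneg_right this (abs_nonneg _)
        _ = |H (q.2.2.1, q.2.2.2)| := one_mul _
    · -- locally equal to H composed with projection
      have hmem : {q : ℝ × ℝ × ℝ × ℝ | 0 < q.1} ∈ nhds p :=
        (isOpen_lt continuous_const continuous_fst).mem_nhds hgt
      refine (hHc.continuousAt (x := p)).congr ?_
      filter_upwards [hmem] with q hq
      simp [thetaF, Theta, hq]

noncomputable def detFactorC (H : ℝ × ℝ → ℝ) (q : ℝ × ℝ × ℝ × ℝ) : ℝ :=
  detFactor H q.1 (q.2.2.1, q.2.2.2)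

lemma continuous_detFactorC {H : ℝ × ℝ → ℝ} (hH : ContDiff ℝ (⊤ : ℕ∞) H) :
    Continuous (detFactorC H) := by
  have hxy : Continuous (fun q : ℝ × ℝ × ℝ × ℝ => (q.2.2.1, q.2.2.2)) :=
    continuous_snd.comp continuous_snd
  have hm : Continuous (fun q : ℝ × ℝ × ℝ × ℝ => max q.1 0) :=
    continuous_fst.max continuous_const
  have c1 : Continuous (fun q : ℝ × ℝ × ℝ × ℝ => HX (HX H) (q.2.2.1, q.2.2.2)) :=
    (contDiff_HX (contDiff_HX hH)).continuous.comp hxy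
  have c2 : Continuous (fun q : ℝ × ℝ × ℝ × ℝ => HY (HY H) (q.2.2.1, q.2.2.2)) :=
    (contDiff_HY (contDiff_HY hH)).continuous.comp hxy
  have c3 : Continuous (fun q : ℝ × ℝ × ℝ × ℝ => HY (HX H) (q.2.2.1, q.2.2.2)) :=
    (contDiff_HY (contDiff_HX hH)).continuous.comp hxy
  have c4 : Continuous (fun q : ℝ × ℝ × ℝ × ℝ => HX (HY H) (q.2.2.1, q.2.2.2)) :=
    (contDiff_HX (contDiff_HY hH)).continuous.comp hxy
  exact ((continuous_const.add (hm.mul c1)).mul (continuous_const.add (hm.mul c2))).sub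
    ((hm.mul c3).mul (hm.mul c4))
/-- For smooth `H`, near every point of the open half-spaces `{U < 0}` and `{U > 0}`
where `I + U₊ Hess H` is invertible, the Penrose transformation restricts to a smooth
diffeomorphism onto its image; moreover `T` is discontinuous precisely at the points of
the null hypersurface `{U = 0}` where `H ≠ 0`. -/
theorem penroseT_local_diffeo_and_discontinuity
    (H : ℝ × ℝ → ℝ) (hH : ContDiff ℝ (⊤ : ℕ∞) H) :
    (∀ p : ℝ × ℝ × ℝ × ℝ, p.1 ≠ 0 → detFactor H p.1 (p.2.2.1, p.2.2.2) ≠ 0 →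
      ∃ s : Set (ℝ × ℝ × ℝ × ℝ), IsOpen s ∧ p ∈ s ∧
        (s ⊆ {q | q.1 < 0} ∨ s ⊆ {q | 0 < q.1}) ∧
        ContDiffOn ℝ (⊤ : ℕ∞) (PenroseT H) s ∧
        Set.InjOn (PenroseT H) s ∧
        IsOpen (PenroseT H '' s) ∧
        ∃ Tinv : ℝ × ℝ × ℝ × ℝ → ℝ × ℝ × ℝ × ℝ,
          ContDiffOn ℝ (⊤ : ℕ∞) Tinv (PenroseT H '' s) ∧
          ∀ q ∈ s, Tinv (PenroseT H q) = q) ∧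
    (∀ p : ℝ × ℝ × ℝ × ℝ,
      ¬ ContinuousAt (PenroseT H) p ↔ (p.1 = 0 ∧ H (p.2.2.1, p.2.2.2) ≠ 0)) := by
  constructor
  · intro p hp1 hdet
    rcases hp1.lt_or_gt with hlt | hgt
    · -- case U < 0 : `T` is the identity there
      have hTeq : ∀ q ∈ {q : ℝ × ℝ × ℝ × ℝ | q.1 < 0}, PenroseT H q = q := by
        intro q hq
        have h1 : ¬ (0 < q.1) := not_lt.mpr (le_of_lt hq)
        have h2 : max q.1 0 = 0 := max_eq_right (le_of_lt hq)
        simp [PenroseT, Theta, h1, h2]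
      refine ⟨{q | q.1 < 0}, isOpen_lt continuous_fst continuous_const, hlt,
        Or.inl (subset_refl _), contDiff_id.contDiffOn.congr hTeq, ?_, ?_, ?_⟩
      · intro x hx y hy hxyq
        rwa [hTeq x hx, hTeq y hy] at hxyq
      · rw [Set.image_congr hTeq, Set.image_id']
        exact isOpen_lt continuous_fst continuous_const
      · refine ⟨id, contDiff_id.contDiffOn, fun q hq => ?_⟩
        rw [hTeq q hq]; rfl
    · -- case U > 0 : inverse function theorem
      obtain ⟨A, hA⟩ := fPos_hasFDerivAt_equiv hH p hgt hdet
      have hfC := contDiff_fPos hH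
      set Φ := hfC.contDiffAt.toOpenPartialHomeomorph (fPos H) hA (by simp) with hΦ
      set D : Set (ℝ × ℝ × ℝ × ℝ) := {q | 0 < q.1 ∧ detFactorC H q ≠ 0} with hD
      have hDopen : IsOpen D := by
        have : D = {q : ℝ × ℝ × ℝ × ℝ | 0 < q.1} ∩ (detFactorC H) ⁻¹' ({0}ᶜ) := by
          ext q
          simp [hD, Set.mem_setOf_eq]
        rw [this]
        exact (isOpen_lt continuous_const continuous_fst).inter
          (isOpen_compl_singleton.preimage (continuous_detFactorC hH))
      set s := Φ.source ∩ D with hs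
      have hsopen : IsOpen s := Φ.open_source.inter hDopen
      have hps : p ∈ s :=
        ⟨ContDiffAt.mem_toOpenPartialHomeomorph_source hfC.contDiffAt hA (by simp), hgt, hdet⟩
      have hTeq : ∀ q ∈ s, PenroseT H q = fPos H q := by
        intro q hq
        have h0 : 0 < q.1 := hq.2.1
        have hm : max q.1 0 = q.1 := max_eq_left h0.le
        simp only [PenroseT, fPos, Theta, if_pos h0, hm]
        exact Prod.ext rfl (Prod.ext (by ring) rfl)
      have himg : PenroseT H '' s = fPos H '' s := Set.image_congr hTeq
      refine ⟨s, hsopen, hps, Or.inr (fun q hq => hq.2.1),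
        (hfC.contDiffOn).congr hTeq, ?_, ?_, ?_⟩
      · intro x hx y hy hxyq
        rw [hTeq x hx, hTeq y hy] at hxyq
        exact Φ.injOn hx.1 hy.1 hxyq
      · rw [himg]
        have h1 : fPos H '' s = Φ.target ∩ Φ.symm ⁻¹' s :=
          Φ.image_eq_target_inter_inv_preimage Set.inter_subset_left
        rw [h1]
        exact Φ.isOpen_inter_preimage_symm hsopen
      · refine ⟨Φ.symm, ?_, ?_⟩
        · rw [himg]
          intro b hb
          obtain ⟨x, hx, rfl⟩ := hb
          have hxsrc : x ∈ Φ.source := hx.1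
          have hbt : fPos H x ∈ Φ.target := Φ.map_source hxsrc
          have hsx : Φ.symm (fPos H x) = x := Φ.left_inv hxsrc
          obtain ⟨Ax, hAx⟩ := fPos_hasFDerivAt_equiv hH x hx.2.1 hx.2.2
          have hca : ContDiffAt ℝ (⊤ : ℕ∞) (Φ.symm) (fPos H x) := by
            refine Φ.contDiffAt_symm (f₀' := Ax) hbt ?_ ?_
            · rw [hsx]; exact hAx
            · rw [hsx]; exact hfC.contDiffAt
          exact hca.contDiffWithinAt
        · intro q hq
          rw [hTeq q hq]
          exact Φ.left_inv hq.1
  · intro p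
    rw [continuousAt_penroseT_iff hH p, continuousAt_thetaF_iff hH p, not_not]
end

section
/- Let γ(U) = (V(U), X(U), Y(U)) be a C¹ curve in ℝ³ and define for U < 0 and U > 0 the transformed curve (𝒱(U), x(U), y(U)) via the Penrose transformation. Then the one-sided limits at U = 0 satisfy: x⁻ = x⁺, y⁻ = y⁺, ẋ⁻ = ẋ⁺ − H_{,X}, ẏ⁻ = ẏ⁺ − H_{,Y}, 𝒱⁻ = 𝒱⁺ − H, and 𝒱̇⁻ = 𝒱̇⁺ − H_{,X} ẋ⁺ − H_{,Y} ẏ⁺ + ½(H_{,X}² + H_{,Y}²), where H and its derivatives are evaluated at (X(0), Y(0)). -/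
open Filter

lemma side_limits (f g : ℝ → ℝ) (s : Set ℝ) (hs : IsOpen s)
    (hg : ContDiff ℝ 1 g) (hfg : ∀ u ∈ s, f u = g u) :
    Tendsto f (nhdsWithin 0 s) (nhds (g 0)) ∧
    Tendsto (deriv f) (nhdsWithin 0 s) (nhds (deriv g 0)) := by
  constructor
  · refine ((hg.continuous.tendsto 0).mono_left nhdsWithin_le_nhds).congr' ?_
    filter_upwards [eventually_mem_nhdsWithin] with u hu using (hfg u hu).symm
  · refine (((hg.continuous_deriv le_rfl).tendsto 0).mono_left nhdsWithin_le_nhds).congr' ?_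
    filter_upwards [eventually_mem_nhdsWithin] with u hu
    exact (Filter.EventuallyEq.deriv_eq
      (Filter.eventuallyEq_of_mem (hs.mem_nhds hu) hfg)).symm


/-- Matching of the interaction data across the impulse.  Let `U ↦ (V U, X U, Y U)` be a
`C¹` curve (a geodesic of the continuous Rosen form) and transform it by the Penrose
transformation on either side of the impulse.  Then all one-sided limits at `U = 0` of
the transformed curve `(𝒱, x, y)` and of its velocity exist, and they satisfy
`x⁻ = x⁺`, `y⁻ = y⁺`, `ẋ⁻ = ẋ⁺ − H_{,X}`, `ẏ⁻ = ẏ⁺ − H_{,Y}`, `𝒱⁻ = 𝒱⁺ − H`, and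
`𝒱̇⁻ = 𝒱̇⁺ − H_{,X} ẋ⁺ − H_{,Y} ẏ⁺ + ½(H_{,X}² + H_{,Y}²)`, all partial derivatives of
`H` being evaluated at `(X 0, Y 0)`. -/
theorem penrose_matching
    (H : ℝ × ℝ → ℝ) (hH : ContDiff ℝ (⊤ : ℕ∞) H)
    (V X Y : ℝ → ℝ) (hV : ContDiff ℝ 1 V) (hX : ContDiff ℝ 1 X) (hY : ContDiff ℝ 1 Y) :
    let v : ℝ → ℝ := fun U => V U + Theta U * H (X U, Y U)
      + (1/2) * max U 0 * ((HX H (X U, Y U))^2 + (HY H (X U, Y U))^2)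
    let x : ℝ → ℝ := fun U => X U + max U 0 * HX H (X U, Y U)
    let y : ℝ → ℝ := fun U => Y U + max U 0 * HY H (X U, Y U)
    ∃ vm vp xm xp ym yp dvm dvp dxm dxp dym dyp : ℝ,
      Tendsto v (nhdsWithin 0 (Set.Iio 0)) (nhds vm) ∧
      Tendsto v (nhdsWithin 0 (Set.Ioi 0)) (nhds vp) ∧
      Tendsto x (nhdsWithin 0 (Set.Iio 0)) (nhds xm) ∧
      Tendsto x (nhdsWithin 0 (Set.Ioi 0)) (nhds xp) ∧
      Tendsto y (nhdsWithin 0 (Set.Iio 0)) (nhds ym) ∧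
      Tendsto y (nhdsWithin 0 (Set.Ioi 0)) (nhds yp) ∧
      Tendsto (deriv v) (nhdsWithin 0 (Set.Iio 0)) (nhds dvm) ∧
      Tendsto (deriv v) (nhdsWithin 0 (Set.Ioi 0)) (nhds dvp) ∧
      Tendsto (deriv x) (nhdsWithin 0 (Set.Iio 0)) (nhds dxm) ∧
      Tendsto (deriv x) (nhdsWithin 0 (Set.Ioi 0)) (nhds dxp) ∧
      Tendsto (deriv y) (nhdsWithin 0 (Set.Iio 0)) (nhds dym) ∧
      Tendsto (deriv y) (nhdsWithin 0 (Set.Ioi 0)) (nhds dyp) ∧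
      xm = xp ∧
      ym = yp ∧
      dxm = dxp - HX H (X 0, Y 0) ∧
      dym = dyp - HY H (X 0, Y 0) ∧
      vm = vp - H (X 0, Y 0) ∧
      dvm = dvp - HX H (X 0, Y 0) * dxp - HY H (X 0, Y 0) * dyp
        + (1/2) * ((HX H (X 0, Y 0))^2 + (HY H (X 0, Y 0))^2) := by
  intro v x y
  -- smooth building blocks
  have hHX : ContDiff ℝ (⊤ : ℕ∞) (HX H) := (hH.fderiv_right le_rfl).clm_apply contDiff_const
  have hHY : ContDiff ℝ (⊤ : ℕ∞) (HY H) := (hH.fderiv_right le_rfl).clm_apply contDiff_const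
  have hXY : ContDiff ℝ 1 (fun U => (X U, Y U)) := hX.prodMk hY
  set g : ℝ → ℝ := fun U => HX H (X U, Y U) with hgdef
  set k : ℝ → ℝ := fun U => HY H (X U, Y U) with hkdef
  set h : ℝ → ℝ := fun U => H (X U, Y U) with hhdef
  have hg1 : ContDiff ℝ 1 g := (hHX.of_le (by simp)).comp hXY
  have hk1 : ContDiff ℝ 1 k := (hHY.of_le (by simp)).comp hXY
  have hh1 : ContDiff ℝ 1 h := (hH.of_le (by simp)).comp hXY
  set xp_fun : ℝ → ℝ := fun U => X U + U * g U with hxpdef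
  set yp_fun : ℝ → ℝ := fun U => Y U + U * k U with hypdef
  set vp_fun : ℝ → ℝ := fun U => V U + h U + (1/2) * U * (g U ^ 2 + k U ^ 2) with hvpdef
  have hxp1 : ContDiff ℝ 1 xp_fun := hX.add (contDiff_id.mul hg1)
  have hyp1 : ContDiff ℝ 1 yp_fun := hY.add (contDiff_id.mul hk1)
  have hvp1 : ContDiff ℝ 1 vp_fun :=
    (hV.add hh1).add (((contDiff_const.mul contDiff_id)).mul ((hg1.pow 2).add (hk1.pow 2)))
  -- agreement on the two sides
  have hxm : ∀ u ∈ Set.Iio (0:ℝ), x u = X u := by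
    intro u hu
    have hu' : u < 0 := hu
    simp [x, max_eq_right hu'.le]
  have hym : ∀ u ∈ Set.Iio (0:ℝ), y u = Y u := by
    intro u hu
    have hu' : u < 0 := hu
    simp [y, max_eq_right hu'.le]
  have hvm : ∀ u ∈ Set.Iio (0:ℝ), v u = V u := by
    intro u hu
    have hu' : u < 0 := hu
    simp [v, Theta, max_eq_right hu'.le, not_lt.mpr hu'.le]
  have hxp : ∀ u ∈ Set.Ioi (0:ℝ), x u = xp_fun u := by
    intro u hu
    have hu' : (0:ℝ) < u := hu
    simp [x, xp_fun, g, max_eq_left hu'.le]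
  have hyp : ∀ u ∈ Set.Ioi (0:ℝ), y u = yp_fun u := by
    intro u hu
    have hu' : (0:ℝ) < u := hu
    simp [y, yp_fun, k, max_eq_left hu'.le]
  have hvp : ∀ u ∈ Set.Ioi (0:ℝ), v u = vp_fun u := by
    intro u hu
    have hu' : (0:ℝ) < u := hu
    simp only [v, vp_fun, Theta, if_pos hu', max_eq_left hu'.le, hhdef, hgdef, hkdef]
    ring
  obtain ⟨hxm0, hxm1⟩ := side_limits x X _ isOpen_Iio hX hxm
  obtain ⟨hym0, hym1⟩ := side_limits y Y _ isOpen_Iio hY hym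
  obtain ⟨hvm0, hvm1⟩ := side_limits v V _ isOpen_Iio hV hvm
  obtain ⟨hxp0, hxp1'⟩ := side_limits x xp_fun _ isOpen_Ioi hxp1 hxp
  obtain ⟨hyp0, hyp1'⟩ := side_limits y yp_fun _ isOpen_Ioi hyp1 hyp
  obtain ⟨hvp0, hvp1'⟩ := side_limits v vp_fun _ isOpen_Ioi hvp1 hvp
  -- derivatives at 0 of the plus-side functions
  have hXd : HasDerivAt X (deriv X 0) 0 := (hX.differentiable one_ne_zero 0).hasDerivAt
  have hYd : HasDerivAt Y (deriv Y 0) 0 := (hY.differentiable one_ne_zero 0).hasDerivAt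
  have hVd : HasDerivAt V (deriv V 0) 0 := (hV.differentiable one_ne_zero 0).hasDerivAt
  have hgd : HasDerivAt g (deriv g 0) 0 := (hg1.differentiable one_ne_zero 0).hasDerivAt
  have hkd : HasDerivAt k (deriv k 0) 0 := (hk1.differentiable one_ne_zero 0).hasDerivAt
  set p0 : ℝ × ℝ := (X 0, Y 0) with hp0
  set a : ℝ := HX H p0 with ha
  set b : ℝ := HY H p0 with hb
  -- deriv of h at 0
  have hcurve : HasDerivAt (fun U => (X U, Y U)) (deriv X 0, deriv Y 0) 0 := hXd.prodMk hYd
  have hhd : HasDerivAt h (fderiv ℝ H p0 (deriv X 0, deriv Y 0)) 0 :=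
    ((hH.differentiable (by simp) p0).hasFDerivAt).comp_hasDerivAt 0 hcurve
  have hlin : fderiv ℝ H p0 (deriv X 0, deriv Y 0) = deriv X 0 * a + deriv Y 0 * b := by
    have : (deriv X 0, deriv Y 0) = deriv X 0 • ((1:ℝ), (0:ℝ)) + deriv Y 0 • ((0:ℝ), (1:ℝ)) := by
      simp
    rw [this, map_add, map_smul, map_smul]
    simp [ha, hb, HX, HY, smul_eq_mul]
  rw [hlin] at hhd
  -- xp_fun deriv
  have hxpd : HasDerivAt xp_fun (deriv X 0 + (1 * g 0 + 0 * deriv g 0)) 0 := by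
    refine (hXd.add ((hasDerivAt_id 0).mul hgd)).congr_deriv ?_; simp
  have hypd : HasDerivAt yp_fun (deriv Y 0 + (1 * k 0 + 0 * deriv k 0)) 0 := by
    refine (hYd.add ((hasDerivAt_id 0).mul hkd)).congr_deriv ?_; simp
  have hSd : HasDerivAt (fun U => g U ^ 2 + k U ^ 2)
      (2 * g 0 ^ 1 * deriv g 0 + 2 * k 0 ^ 1 * deriv k 0) 0 :=
    (hgd.pow 2).add (hkd.pow 2)
  have hvpd : HasDerivAt vp_fun
      (deriv V 0 + (deriv X 0 * a + deriv Y 0 * b) + 2⁻¹ * (g 0 ^ 2 + k 0 ^ 2)) 0 := by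
    have h2 : HasDerivAt (fun U : ℝ => (1/2 : ℝ) * U) (1/2 * 1) 0 :=
      (hasDerivAt_id 0).const_mul (1/2)
    rw [hvpdef]
    refine ((hVd.add hhd).add (h2.mul hSd)).congr_deriv ?_; norm_num
  have hg0 : g 0 = a := rfl
  have hk0 : k 0 = b := rfl
  refine ⟨V 0, vp_fun 0, X 0, xp_fun 0, Y 0, yp_fun 0,
    deriv V 0, deriv vp_fun 0, deriv X 0, deriv xp_fun 0, deriv Y 0, deriv yp_fun 0,
    hvm0, hvp0, hxm0, hxp0, hym0, hyp0, hvm1, hvp1', hxm1, hxp1', hym1, hyp1',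
    ?_, ?_, ?_, ?_, ?_, ?_⟩
  · simp [xp_fun]
  · simp [yp_fun]
  · rw [hxpd.deriv]; rw [hg0]; ring
  · rw [hypd.deriv]; rw [hk0]; ring
  · simp [vp_fun, h, hp0]
  · rw [hvpd.deriv, hxpd.deriv, hypd.deriv, hg0, hk0]
    show deriv V 0 = _
    ring
end
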